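/- Let u, v : ℝ² → ℝ be smooth functions of (x,t) solving the KKS system, and define p, q : ℝ² → ℝ by p = Q₁ᵘ(u,v) and q = Q₁ᵛ(u,v) (the components of the first commuting flow evaluated on (u,v) and its x-derivatives). Then (p,q) solves the linearization of the KKS system along (u,v): p_t = 4p_xxx − q_xxx − 12u_x p − 12u p_x + u_x q + v p_x + 2v_x p + 2u q_x and q_t = 9p_xxx − 2q_xxx − 12u_x q − 12v p_x − 6v_x p − 6u q_x + 4v_x q + 4v q_x. That is, Q₁ is a local generalized symmetry of the KKS system. -/

import Mathlib

/-- First component `Q₁ᵘ` of the first commuting flow of the KKS hierarchy. -/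
noncomputable def Q1u (u v : ℝ → ℝ) (x : ℝ) : ℝ :=
  2 * iteratedDeriv 5 u x - (5 / 9) * iteratedDeriv 5 v x
    - 20 * u x * iteratedDeriv 3 u x + (50 / 9) * u x * iteratedDeriv 3 v x
    + (40 / 9) * v x * iteratedDeriv 3 u x - (10 / 9) * v x * iteratedDeriv 3 v x
    - 50 * deriv u x * iteratedDeriv 2 u x + (125 / 9) * deriv u x * iteratedDeriv 2 v x
    + (40 / 3) * deriv v x * iteratedDeriv 2 u x - (10 / 3) * deriv v x * iteratedDeriv 2 v x
    - (40 / 3) * u x * v x * deriv u x + (20 / 9) * u x * v x * deriv v x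
    + 40 * (u x) ^ 2 * deriv u x - (80 / 9) * (u x) ^ 2 * deriv v x
    + (5 / 9) * (v x) ^ 2 * deriv u x

/-- Second component `Q₁ᵛ` of the first commuting flow of the KKS hierarchy. -/
noncomputable def Q1v (u v : ℝ → ℝ) (x : ℝ) : ℝ :=
  5 * iteratedDeriv 5 u x - (4 / 3) * iteratedDeriv 5 v x
    - 40 * u x * iteratedDeriv 3 u x + 10 * u x * iteratedDeriv 3 v x
    + (10 / 3) * v x * iteratedDeriv 3 u x - (5 / 9) * v x * iteratedDeriv 3 v x
    - 120 * deriv u x * iteratedDeriv 2 u x + 30 * deriv u x * iteratedDeriv 2 v x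
    + (80 / 3) * deriv v x * iteratedDeriv 2 u x - (55 / 9) * deriv v x * iteratedDeriv 2 v x
    + (160 / 3) * u x * v x * deriv u x - 20 * u x * v x * deriv v x
    + (40 / 3) * (u x) ^ 2 * deriv v x - (40 / 3) * (v x) ^ 2 * deriv u x
    + (35 / 9) * (v x) ^ 2 * deriv v x


open Function

namespace KKSaux

/-- Partial derivative in the first (space) variable. -/
noncomputable def Dx (F : ℝ → ℝ → ℝ) : ℝ → ℝ → ℝ := fun x t => deriv (fun y => F y t) x

/-- Partial derivative in the second (time) variable. -/
noncomputable def Dt (F : ℝ → ℝ → ℝ) : ℝ → ℝ → ℝ := fun x t => deriv (fun s => F x s) t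

variable {F : ℝ → ℝ → ℝ}

theorem hasDerivAt_slice_x (hF : ContDiff ℝ (⊤ : ℕ∞) (uncurry F)) (x t : ℝ) :
    HasDerivAt (fun y => F y t) (fderiv ℝ (uncurry F) (x, t) (1, 0)) x := by
  have h1 : HasDerivAt (fun y : ℝ => (y, t)) ((1 : ℝ), (0 : ℝ)) x :=
    HasDerivAt.prodMk (hasDerivAt_id x) (hasDerivAt_const x t)
  exact ((hF.differentiable (by simp) (x, t)).hasFDerivAt).comp_hasDerivAt x h1

theorem hasDerivAt_slice_t (hF : ContDiff ℝ (⊤ : ℕ∞) (uncurry F)) (x t : ℝ) :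
    HasDerivAt (fun s => F x s) (fderiv ℝ (uncurry F) (x, t) (0, 1)) t := by
  have h1 : HasDerivAt (fun s : ℝ => (x, s)) ((0 : ℝ), (1 : ℝ)) t :=
    HasDerivAt.prodMk (hasDerivAt_const t x) (hasDerivAt_id t)
  exact ((hF.differentiable (by simp) (x, t)).hasFDerivAt).comp_hasDerivAt t h1

theorem Dx_eq_fderiv (hF : ContDiff ℝ (⊤ : ℕ∞) (uncurry F)) (x t : ℝ) :
    Dx F x t = fderiv ℝ (uncurry F) (x, t) (1, 0) :=
  (hasDerivAt_slice_x hF x t).deriv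

theorem Dt_eq_fderiv (hF : ContDiff ℝ (⊤ : ℕ∞) (uncurry F)) (x t : ℝ) :
    Dt F x t = fderiv ℝ (uncurry F) (x, t) (0, 1) :=
  (hasDerivAt_slice_t hF x t).deriv

theorem contDiff_Dx (hF : ContDiff ℝ (⊤ : ℕ∞) (uncurry F)) : ContDiff ℝ (⊤ : ℕ∞) (uncurry (Dx F)) := by
  have h : uncurry (Dx F) = fun p : ℝ × ℝ => fderiv ℝ (uncurry F) p ((1 : ℝ), (0 : ℝ)) := by
    funext p
    exact Dx_eq_fderiv hF p.1 p.2
  rw [h]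
  exact (hF.fderiv_right (by simp)).clm_apply contDiff_const

theorem contDiff_Dt (hF : ContDiff ℝ (⊤ : ℕ∞) (uncurry F)) : ContDiff ℝ (⊤ : ℕ∞) (uncurry (Dt F)) := by
  have h : uncurry (Dt F) = fun p : ℝ × ℝ => fderiv ℝ (uncurry F) p ((0 : ℝ), (1 : ℝ)) := by
    funext p
    exact Dt_eq_fderiv hF p.1 p.2
  rw [h]
  exact (hF.fderiv_right (by simp)).clm_apply contDiff_const

/-- Clairaut: mixed partials commute for smooth functions. -/
theorem Dt_Dx_comm (hF : ContDiff ℝ (⊤ : ℕ∞) (uncurry F)) (x t : ℝ) :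
    Dt (Dx F) x t = Dx (Dt F) x t := by
  set G := uncurry F with hG
  have hdG : ContDiff ℝ (⊤ : ℕ∞) (fderiv ℝ G) := hF.fderiv_right (by simp)
  have h2 : HasFDerivAt (fderiv ℝ G) (fderiv ℝ (fderiv ℝ G) (x, t)) (x, t) :=
    (hdG.differentiable (by simp) (x, t)).hasFDerivAt
  have hsym := second_derivative_symmetric (f := G) (f' := fderiv ℝ G)
    (fun y => (hF.differentiable (by simp) y).hasFDerivAt) h2
  -- left side
  have hL : HasDerivAt (fun s => Dx F x s)
      ((fderiv ℝ (fderiv ℝ G) (x, t) ((0 : ℝ), (1 : ℝ))) ((1 : ℝ), (0 : ℝ))) t := by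
    have h1 : HasDerivAt (fun s : ℝ => (x, s)) ((0 : ℝ), (1 : ℝ)) t :=
      HasDerivAt.prodMk (hasDerivAt_const t x) (hasDerivAt_id t)
    have h3 : HasDerivAt (fun s => fderiv ℝ G (x, s))
        (fderiv ℝ (fderiv ℝ G) (x, t) ((0 : ℝ), (1 : ℝ))) t :=
      h2.comp_hasDerivAt t h1
    have h4 := h3.clm_apply (hasDerivAt_const t ((1 : ℝ), (0 : ℝ)))
    simp only [map_zero, add_zero] at h4
    have he : (fun s => Dx F x s) = fun s => fderiv ℝ G (x, s) ((1 : ℝ), (0 : ℝ)) := by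
      funext s; exact Dx_eq_fderiv hF x s
    rw [he]
    exact h4
  have hR : HasDerivAt (fun y => Dt F y t)
      ((fderiv ℝ (fderiv ℝ G) (x, t) ((1 : ℝ), (0 : ℝ))) ((0 : ℝ), (1 : ℝ))) x := by
    have h1 : HasDerivAt (fun y : ℝ => (y, t)) ((1 : ℝ), (0 : ℝ)) x :=
      HasDerivAt.prodMk (hasDerivAt_id x) (hasDerivAt_const x t)
    have h3 : HasDerivAt (fun y => fderiv ℝ G (y, t))
        (fderiv ℝ (fderiv ℝ G) (x, t) ((1 : ℝ), (0 : ℝ))) x :=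
      h2.comp_hasDerivAt x h1
    have h4 := h3.clm_apply (hasDerivAt_const x ((0 : ℝ), (1 : ℝ)))
    simp only [map_zero, add_zero] at h4
    have he : (fun y => Dt F y t) = fun y => fderiv ℝ G (y, t) ((0 : ℝ), (1 : ℝ)) := by
      funext y; exact Dt_eq_fderiv hF y t
    rw [he]
    exact h4
  calc Dt (Dx F) x t = _ := hL.deriv
    _ = _ := hsym _ _
    _ = Dx (Dt F) x t := hR.deriv.symm

end KKSaux

namespace KKSaux

/-- Formal polynomial expressions in the jet variables of two functions `u`, `v`. -/
inductive E where
  | C : ℚ → E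
  | U : ℕ → E
  | V : ℕ → E
  | add : E → E → E
  | mul : E → E → E

instance : Add E := ⟨E.add⟩
instance : Mul E := ⟨E.mul⟩

/-- Formal `x`-derivative. -/
def E.dx : E → E
  | .C _ => .C 0
  | .U n => .U (n + 1)
  | .V n => .V (n + 1)
  | .add a b => a.dx + b.dx
  | .mul a b => a.dx * b + a * b.dx

/-- Iterated formal `x`-derivative. -/
def dxn : ℕ → E → E
  | 0, e => e
  | n + 1, e => dxn n e.dx

/-- Right-hand side of the `u`-equation of the KKS system. -/
def Etu : E := .C 4 * .U 3 + .C (-1) * .V 3 + .C (-12) * (.U 0 * .U 1)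
  + .C 1 * (.V 0 * .U 1) + .C 2 * (.U 0 * .V 1)

/-- Right-hand side of the `v`-equation of the KKS system. -/
def Etv : E := .C 9 * .U 3 + .C (-2) * .V 3 + .C (-12) * (.V 0 * .U 1)
  + .C (-6) * (.U 0 * .V 1) + .C 4 * (.V 0 * .V 1)

/-- Formal `t`-derivative, using the KKS system to eliminate time derivatives. -/
def E.dt : E → E
  | .C _ => .C 0
  | .U n => dxn n Etu
  | .V n => dxn n Etv
  | .add a b => a.dt + b.dt
  | .mul a b => a.dt * b + a * b.dt

/-- Jets: `J u n = ∂ₓⁿ u`. -/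
noncomputable def J (u : ℝ → ℝ → ℝ) : ℕ → ℝ → ℝ → ℝ
  | 0 => u
  | n + 1 => Dx (J u n)

/-- Evaluation of a formal expression on the jets of `(u, v)` at a point. -/
noncomputable def E.ev (u v : ℝ → ℝ → ℝ) (x t : ℝ) : E → ℝ
  | .C c => (c : ℝ)
  | .U n => J u n x t
  | .V n => J v n x t
  | .add a b => a.ev u v x t + b.ev u v x t
  | .mul a b => a.ev u v x t * b.ev u v x t

theorem dx_dxn (n : ℕ) (e : E) : (dxn n e).dx = dxn (n + 1) e := by
  induction n generalizing e with
  | zero => rfl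
  | succ n ih => exact ih e.dx

theorem contDiff_J {u : ℝ → ℝ → ℝ} (hu : ContDiff ℝ (⊤ : ℕ∞) (Function.uncurry u)) :
    ∀ n, ContDiff ℝ (⊤ : ℕ∞) (Function.uncurry (J u n))
  | 0 => hu
  | n + 1 => contDiff_Dx (contDiff_J hu n)

section Eval

variable {u v : ℝ → ℝ → ℝ} (hu : ContDiff ℝ (⊤ : ℕ∞) (Function.uncurry u))
  (hv : ContDiff ℝ (⊤ : ℕ∞) (Function.uncurry v))

include hu hv in
theorem ev_hasDerivAt_x (e : E) (x t : ℝ) :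
    HasDerivAt (fun y => e.ev u v y t) (e.dx.ev u v x t) x := by
  induction e with
  | C c => simpa [E.dx, E.ev] using hasDerivAt_const x ((c : ℚ) : ℝ)
  | U n =>
    have h := hasDerivAt_slice_x (contDiff_J hu n) x t
    have : E.ev u v x t (E.U n).dx = fderiv ℝ (Function.uncurry (J u n)) (x, t) (1, 0) := by
      show J u (n + 1) x t = _
      show Dx (J u n) x t = _
      exact Dx_eq_fderiv (contDiff_J hu n) x t
    rw [show (E.U n).dx = E.U (n+1) from rfl]
    exact this ▸ h
  | V n =>
    have h := hasDerivAt_slice_x (contDiff_J hv n) x t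
    have : E.ev u v x t (E.V n).dx = fderiv ℝ (Function.uncurry (J v n)) (x, t) (1, 0) := by
      show J v (n + 1) x t = _
      show Dx (J v n) x t = _
      exact Dx_eq_fderiv (contDiff_J hv n) x t
    rw [show (E.V n).dx = E.V (n+1) from rfl]
    exact this ▸ h
  | add a b iha ihb => exact iha.add ihb
  | mul a b iha ihb => exact iha.mul ihb

include hu hv in
theorem ev_deriv_x (e : E) (x t : ℝ) :
    deriv (fun y => e.ev u v y t) x = e.dx.ev u v x t :=
  (ev_hasDerivAt_x hu hv e x t).deriv

include hu hv in
theorem ev_iteratedDeriv (n : ℕ) (e : E) (x t : ℝ) :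
    iteratedDeriv n (fun y => e.ev u v y t) x = (dxn n e).ev u v x t := by
  induction n generalizing e with
  | zero => simp [dxn]
  | succ n ih =>
    rw [iteratedDeriv_succ']
    have h : deriv (fun y => e.ev u v y t) = fun y => e.dx.ev u v y t :=
      funext fun y => ev_deriv_x hu hv e y t
    rw [h]
    exact ih e.dx

end Eval

end KKSaux

namespace KKSaux

@[simp] theorem ev_C (u v : ℝ → ℝ → ℝ) (x t : ℝ) (c : ℚ) :
    (E.C c).ev u v x t = (c : ℝ) := rfl
@[simp] theorem ev_U (u v : ℝ → ℝ → ℝ) (x t : ℝ) (n : ℕ) :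
    (E.U n).ev u v x t = J u n x t := rfl
@[simp] theorem ev_V (u v : ℝ → ℝ → ℝ) (x t : ℝ) (n : ℕ) :
    (E.V n).ev u v x t = J v n x t := rfl
@[simp] theorem ev_add (u v : ℝ → ℝ → ℝ) (x t : ℝ) (a b : E) :
    (a + b).ev u v x t = a.ev u v x t + b.ev u v x t := rfl
@[simp] theorem ev_mul (u v : ℝ → ℝ → ℝ) (x t : ℝ) (a b : E) :
    (a * b).ev u v x t = a.ev u v x t * b.ev u v x t := rfl

@[simp] theorem dx_C (c : ℚ) : (E.C c).dx = E.C 0 := rfl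
@[simp] theorem dx_U (n : ℕ) : (E.U n).dx = E.U (n + 1) := rfl
@[simp] theorem dx_V (n : ℕ) : (E.V n).dx = E.V (n + 1) := rfl
@[simp] theorem dx_add (a b : E) : (a + b).dx = a.dx + b.dx := rfl
@[simp] theorem dx_mul (a b : E) : (a * b).dx = a.dx * b + a * b.dx := rfl

@[simp] theorem dt_C (c : ℚ) : (E.C c).dt = E.C 0 := rfl
@[simp] theorem dt_U (n : ℕ) : (E.U n).dt = dxn n Etu := rfl
@[simp] theorem dt_V (n : ℕ) : (E.V n).dt = dxn n Etv := rfl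
@[simp] theorem dt_add (a b : E) : (a + b).dt = a.dt + b.dt := rfl
@[simp] theorem dt_mul (a b : E) : (a * b).dt = a.dt * b + a * b.dt := rfl

@[simp] theorem dxn0 (e : E) : dxn 0 e = e := rfl
@[simp] theorem dxn1 (e : E) : dxn 1 e = e.dx := rfl
@[simp] theorem dxn2 (e : E) : dxn 2 e = e.dx.dx := rfl
@[simp] theorem dxn3 (e : E) : dxn 3 e = e.dx.dx.dx := rfl
@[simp] theorem dxn4 (e : E) : dxn 4 e = e.dx.dx.dx.dx := rfl
@[simp] theorem dxn5 (e : E) : dxn 5 e = e.dx.dx.dx.dx.dx := rfl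

section Time

variable {u v : ℝ → ℝ → ℝ} (hu : ContDiff ℝ (⊤ : ℕ∞) (Function.uncurry u))
  (hv : ContDiff ℝ (⊤ : ℕ∞) (Function.uncurry v))
  (hut' : ∀ x t : ℝ, deriv (fun s => u x s) t = Etu.ev u v x t)
  (hvt' : ∀ x t : ℝ, deriv (fun s => v x s) t = Etv.ev u v x t)

include hu hv hut' hvt' in
theorem J_hasDerivAt_t_u : ∀ (n : ℕ) (x t : ℝ),
    HasDerivAt (fun s => J u n x s) ((dxn n Etu).ev u v x t) t := by
  intro n
  induction n with
  | zero =>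
    intro x t
    have h := hasDerivAt_slice_t hu x t
    have h2 : (dxn 0 Etu).ev u v x t = fderiv ℝ (Function.uncurry u) (x, t) (0, 1) := by
      rw [dxn0, ← hut' x t]
      exact h.deriv
    exact h2 ▸ h
  | succ n ih =>
    intro x t
    have hJ : ContDiff ℝ (⊤ : ℕ∞) (Function.uncurry (J u n)) := contDiff_J hu n
    have h := hasDerivAt_slice_t (contDiff_Dx hJ) x t
    have h2 : (dxn (n + 1) Etu).ev u v x t
        = fderiv ℝ (Function.uncurry (Dx (J u n))) (x, t) (0, 1) := by
      rw [← h.deriv]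
      show _ = Dt (Dx (J u n)) x t
      rw [Dt_Dx_comm hJ x t]
      have h3 : (fun y => Dt (J u n) y t) = fun y => (dxn n Etu).ev u v y t := by
        funext y
        exact (ih y t).deriv
      have h4 : Dx (Dt (J u n)) x t = (dxn (n + 1) Etu).ev u v x t := by
        show deriv (fun y => Dt (J u n) y t) x = _
        rw [h3, ev_deriv_x hu hv, dx_dxn]
      rw [h4]
    exact h2 ▸ h

include hu hv hut' hvt' in
theorem J_hasDerivAt_t_v : ∀ (n : ℕ) (x t : ℝ),
    HasDerivAt (fun s => J v n x s) ((dxn n Etv).ev u v x t) t := by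
  intro n
  induction n with
  | zero =>
    intro x t
    have h := hasDerivAt_slice_t hv x t
    have h2 : (dxn 0 Etv).ev u v x t = fderiv ℝ (Function.uncurry v) (x, t) (0, 1) := by
      rw [dxn0, ← hvt' x t]
      exact h.deriv
    exact h2 ▸ h
  | succ n ih =>
    intro x t
    have hJ : ContDiff ℝ (⊤ : ℕ∞) (Function.uncurry (J v n)) := contDiff_J hv n
    have h := hasDerivAt_slice_t (contDiff_Dx hJ) x t
    have h2 : (dxn (n + 1) Etv).ev u v x t
        = fderiv ℝ (Function.uncurry (Dx (J v n))) (x, t) (0, 1) := by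
      rw [← h.deriv]
      show _ = Dt (Dx (J v n)) x t
      rw [Dt_Dx_comm hJ x t]
      have h3 : (fun y => Dt (J v n) y t) = fun y => (dxn n Etv).ev u v y t := by
        funext y
        exact (ih y t).deriv
      have h4 : Dx (Dt (J v n)) x t = (dxn (n + 1) Etv).ev u v x t := by
        show deriv (fun y => Dt (J v n) y t) x = _
        rw [h3, ev_deriv_x hu hv, dx_dxn]
      rw [h4]
    exact h2 ▸ h

include hu hv hut' hvt' in
theorem ev_hasDerivAt_t (e : E) (x t : ℝ) :
    HasDerivAt (fun s => e.ev u v x s) (e.dt.ev u v x t) t := by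
  induction e with
  | C c => simpa using hasDerivAt_const t ((c : ℚ) : ℝ)
  | U n => exact J_hasDerivAt_t_u hu hv hut' hvt' n x t
  | V n => exact J_hasDerivAt_t_v hu hv hut' hvt' n x t
  | add a b iha ihb => exact iha.add ihb
  | mul a b iha ihb => exact iha.mul ihb

include hu hv hut' hvt' in
theorem ev_deriv_t (e : E) (x t : ℝ) :
    deriv (fun s => e.ev u v x s) t = e.dt.ev u v x t :=
  (ev_hasDerivAt_t hu hv hut' hvt' e x t).deriv

end Time

/-- The expression `Q₁ᵘ`. -/
def Pexpr : E :=
  .C 2 * .U 5 + .C (-5/9) * .V 5 + .C (-20) * (.U 0 * .U 3) + .C (50/9) * (.U 0 * .V 3)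
  + .C (40/9) * (.V 0 * .U 3) + .C (-10/9) * (.V 0 * .V 3) + .C (-50) * (.U 1 * .U 2)
  + .C (125/9) * (.U 1 * .V 2) + .C (40/3) * (.V 1 * .U 2) + .C (-10/3) * (.V 1 * .V 2)
  + .C (-40/3) * (.U 0 * .V 0 * .U 1) + .C (20/9) * (.U 0 * .V 0 * .V 1)
  + .C 40 * (.U 0 * .U 0 * .U 1) + .C (-80/9) * (.U 0 * .U 0 * .V 1)
  + .C (5/9) * (.V 0 * .V 0 * .U 1)

/-- The expression `Q₁ᵛ`. -/
def Qexpr : E :=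
  .C 5 * .U 5 + .C (-4/3) * .V 5 + .C (-40) * (.U 0 * .U 3) + .C 10 * (.U 0 * .V 3)
  + .C (10/3) * (.V 0 * .U 3) + .C (-5/9) * (.V 0 * .V 3) + .C (-120) * (.U 1 * .U 2)
  + .C 30 * (.U 1 * .V 2) + .C (80/3) * (.V 1 * .U 2) + .C (-55/9) * (.V 1 * .V 2)
  + .C (160/3) * (.U 0 * .V 0 * .U 1) + .C (-20) * (.U 0 * .V 0 * .V 1)
  + .C (40/3) * (.U 0 * .U 0 * .V 1) + .C (-40/3) * (.V 0 * .V 0 * .U 1)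
  + .C (35/9) * (.V 0 * .V 0 * .V 1)

end KKSaux

open KKSaux

set_option maxHeartbeats 4000000 in
/-- If `(u, v)` is a smooth solution of the KKS system and
`(p, q) = (Q₁ᵘ(u,v), Q₁ᵛ(u,v))` is the first commuting flow evaluated on `(u, v)`,
then `(p, q)` solves the linearization of the KKS system along `(u, v)`; i.e. `Q₁`
is a local generalized symmetry of the KKS system. -/
theorem first_flow_is_symmetry (u v p q : ℝ → ℝ → ℝ)
    (hu : ContDiff ℝ (⊤ : ℕ∞) (Function.uncurry u)) (hv : ContDiff ℝ (⊤ : ℕ∞) (Function.uncurry v))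
    (hut : ∀ x t : ℝ, deriv (fun s => u x s) t
      = 4 * iteratedDeriv 3 (fun y => u y t) x - iteratedDeriv 3 (fun y => v y t) x
        - 12 * u x t * deriv (fun y => u y t) x + v x t * deriv (fun y => u y t) x
        + 2 * u x t * deriv (fun y => v y t) x)
    (hvt : ∀ x t : ℝ, deriv (fun s => v x s) t
      = 9 * iteratedDeriv 3 (fun y => u y t) x - 2 * iteratedDeriv 3 (fun y => v y t) x
        - 12 * v x t * deriv (fun y => u y t) x - 6 * u x t * deriv (fun y => v y t) x
        + 4 * v x t * deriv (fun y => v y t) x)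
    (hp : ∀ x t : ℝ, p x t = Q1u (fun y => u y t) (fun y => v y t) x)
    (hq : ∀ x t : ℝ, q x t = Q1v (fun y => u y t) (fun y => v y t) x) :
    (∀ x t : ℝ, deriv (fun s => p x s) t
      = 4 * iteratedDeriv 3 (fun y => p y t) x - iteratedDeriv 3 (fun y => q y t) x
        - 12 * deriv (fun y => u y t) x * p x t - 12 * u x t * deriv (fun y => p y t) x
        + deriv (fun y => u y t) x * q x t + v x t * deriv (fun y => p y t) x
        + 2 * deriv (fun y => v y t) x * p x t + 2 * u x t * deriv (fun y => q y t) x) ∧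
    (∀ x t : ℝ, deriv (fun s => q x s) t
      = 9 * iteratedDeriv 3 (fun y => p y t) x - 2 * iteratedDeriv 3 (fun y => q y t) x
        - 12 * deriv (fun y => u y t) x * q x t - 12 * v x t * deriv (fun y => p y t) x
        - 6 * deriv (fun y => v y t) x * p x t - 6 * u x t * deriv (fun y => q y t) x
        + 4 * deriv (fun y => v y t) x * q x t + 4 * v x t * deriv (fun y => q y t) x) := by
  have hJ0u : J u 0 = u := rfl
  have hJ0v : J v 0 = v := rfl
  have h1u : ∀ x t : ℝ, deriv (fun y => u y t) x = J u 1 x t := fun _ _ => rfl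
  have h1v : ∀ x t : ℝ, deriv (fun y => v y t) x = J v 1 x t := fun _ _ => rfl
  have h2u : ∀ x t : ℝ, iteratedDeriv 2 (fun y => u y t) x = J u 2 x t :=
    fun x t => ev_iteratedDeriv hu hv 2 (E.U 0) x t
  have h2v : ∀ x t : ℝ, iteratedDeriv 2 (fun y => v y t) x = J v 2 x t :=
    fun x t => ev_iteratedDeriv hu hv 2 (E.V 0) x t
  have h3u : ∀ x t : ℝ, iteratedDeriv 3 (fun y => u y t) x = J u 3 x t :=
    fun x t => ev_iteratedDeriv hu hv 3 (E.U 0) x t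
  have h3v : ∀ x t : ℝ, iteratedDeriv 3 (fun y => v y t) x = J v 3 x t :=
    fun x t => ev_iteratedDeriv hu hv 3 (E.V 0) x t
  have h5u : ∀ x t : ℝ, iteratedDeriv 5 (fun y => u y t) x = J u 5 x t :=
    fun x t => ev_iteratedDeriv hu hv 5 (E.U 0) x t
  have h5v : ∀ x t : ℝ, iteratedDeriv 5 (fun y => v y t) x = J v 5 x t :=
    fun x t => ev_iteratedDeriv hu hv 5 (E.V 0) x t
  have hut' : ∀ x t : ℝ, deriv (fun s => u x s) t = Etu.ev u v x t := by
    intro x t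
    rw [hut x t, h3u x t, h3v x t, h1u x t, h1v x t]
    simp only [Etu, ev_add, ev_mul, ev_C, ev_U, ev_V, hJ0u, hJ0v]
    push_cast
    ring
  have hvt' : ∀ x t : ℝ, deriv (fun s => v x s) t = Etv.ev u v x t := by
    intro x t
    rw [hvt x t, h3u x t, h3v x t, h1u x t, h1v x t]
    simp only [Etv, ev_add, ev_mul, ev_C, ev_U, ev_V, hJ0u, hJ0v]
    push_cast
    ring
  have hpe : ∀ x t : ℝ, p x t = Pexpr.ev u v x t := by
    intro x t
    rw [hp x t]
    simp only [Q1u]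
    rw [h5u x t, h5v x t, h3u x t, h3v x t, h2u x t, h2v x t, h1u x t, h1v x t]
    simp only [Pexpr, ev_add, ev_mul, ev_C, ev_U, ev_V, hJ0u, hJ0v]
    push_cast
    ring
  have hqe : ∀ x t : ℝ, q x t = Qexpr.ev u v x t := by
    intro x t
    rw [hq x t]
    simp only [Q1v]
    rw [h5u x t, h5v x t, h3u x t, h3v x t, h2u x t, h2v x t, h1u x t, h1v x t]
    simp only [Qexpr, ev_add, ev_mul, ev_C, ev_U, ev_V, hJ0u, hJ0v]
    push_cast
    ring
  constructor
  · intro x t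
    rw [show (fun s => p x s) = fun s => Pexpr.ev u v x s from funext fun s => hpe x s,
      ev_deriv_t hu hv hut' hvt' Pexpr x t,
      show (fun y => p y t) = fun y => Pexpr.ev u v y t from funext fun y => hpe y t,
      show (fun y => q y t) = fun y => Qexpr.ev u v y t from funext fun y => hqe y t,
      ev_iteratedDeriv hu hv 3 Pexpr x t, ev_iteratedDeriv hu hv 3 Qexpr x t,
      ev_deriv_x hu hv Pexpr x t, ev_deriv_x hu hv Qexpr x t,
      hpe x t, hqe x t, h1u x t, h1v x t]
    simp only [Pexpr, Qexpr, Etu, Etv, dt_add, dt_mul, dt_U, dt_V, dt_C,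
      dxn0, dxn1, dxn2, dxn3, dxn4, dxn5, dx_add, dx_mul, dx_U, dx_V, dx_C,
      ev_add, ev_mul, ev_C, ev_U, ev_V, Nat.reduceAdd, hJ0u, hJ0v]
    push_cast
    ring
  · intro x t
    rw [show (fun s => q x s) = fun s => Qexpr.ev u v x s from funext fun s => hqe x s,
      ev_deriv_t hu hv hut' hvt' Qexpr x t,
      show (fun y => p y t) = fun y => Pexpr.ev u v y t from funext fun y => hpe y t,
      show (fun y => q y t) = fun y => Qexpr.ev u v y t from funext fun y => hqe y t,
      ev_iteratedDeriv hu hv 3 Pexpr x t, ev_iteratedDeriv hu hv 3 Qexpr x t,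
      ev_deriv_x hu hv Pexpr x t, ev_deriv_x hu hv Qexpr x t,
      hpe x t, hqe x t, h1u x t, h1v x t]
    simp only [Pexpr, Qexpr, Etu, Etv, dt_add, dt_mul, dt_U, dt_V, dt_C,
      dxn0, dxn1, dxn2, dxn3, dxn4, dxn5, dx_add, dx_mul, dx_U, dx_V, dx_C,
      ev_add, ev_mul, ev_C, ev_U, ev_V, Nat.reduceAdd, hJ0u, hJ0v]
    push_cast
    ring
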